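/- arXiv:1503.03736 — 5 statements merged into one kernel-verified Lean document; each statement's English description precedes it below -/
import Mathlib

section
/- A monomial ideal I in S = K[x_1,...,x_n] is irreducible (i.e., cannot be written as the intersection of two strictly larger monomial ideals) if and only if I is generated by pure powers of a subset of the variables, i.e., I = (x_{i_1}^{a_1}, ..., x_{i_r}^{a_r}) for some variables x_{i_j} and positive integers a_j. -/
/-!
Both sides are equivalent to *lcm-primality* of `I`: whenever the lcm of two monomials lies in
`I`, one of them does. If `lcm(x^u, x^v) ∈ I` but `x^u, x^v ∉ I`, then
`I = (I + (x^u)) ∩ (I + (x^v))`; conversely, a decomposition `I = J₁ ∩ J₂` into larger monomial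
ideals yields monomials `x^u ∈ J₁ \ I`, `x^v ∈ J₂ \ I` whose lcm lies in `I`. An ideal generated
by pure powers is lcm-prime, since `x_i^a ∣ lcm(x^u, x^v)` forces `x_i^a ∣ x^u` or `x_i^a ∣ x^v`.
In a proper lcm-prime ideal, writing `x^d = lcm(x_i^(d_i), x^(d - d_i e_i))` and inducting on
the support of `d` shows that every monomial of `I` is a multiple of a pure power lying in `I`.
-/

open MvPolynomial

/-- An ideal of a polynomial ring is a *monomial ideal* if it is generated by monomials. -/
def IsMonomialIdeal {K : Type*} [Field K] {n : ℕ}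
    (I : Ideal (MvPolynomial (Fin n) K)) : Prop :=
  ∃ G : Set (Fin n →₀ ℕ), I = Ideal.span ((fun d => monomial d (1 : K)) '' G)

theorem Finsupp.add_eq_sup_of_disjoint {ι : Type*} {f g : ι →₀ ℕ} (h : Disjoint f g) :
    f + g = f ⊔ g := by
  rw [Finsupp.disjoint_iff, Finset.disjoint_left] at h
  ext j
  by_cases hj : j ∈ f.support
  · simp [Finsupp.notMem_support_iff.1 (h hj)]
  · simp [Finsupp.notMem_support_iff.1 hj]

namespace MvPolynomial

variable {σ R : Type*} [CommSemiring R]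

theorem monomial_one_mem_of_le {I : Ideal (MvPolynomial σ R)} {d e : σ →₀ ℕ}
    (hd : monomial d (1 : R) ∈ I) (hde : d ≤ e) : monomial e (1 : R) ∈ I :=
  I.mem_of_dvd (monomial_dvd_monomial.2 ⟨Or.inr hde, one_dvd _⟩) hd

theorem monomial_one_mem_span_monomial_image [Nontrivial R] {G : Set (σ →₀ ℕ)}
    {d : σ →₀ ℕ} :
    monomial d (1 : R) ∈ Ideal.span ((fun g => monomial g (1 : R)) '' G) ↔ ∃ g ∈ G, g ≤ d := by
  classical
  rw [mem_ideal_span_monomial_image, support_monomial, if_neg one_ne_zero]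
  simp

theorem monomial_one_mem_span_X_pow_image [Nontrivial R] {T : Set σ} {a : σ → ℕ}
    {d : σ →₀ ℕ} :
    monomial d (1 : R) ∈ Ideal.span ((fun i => (X i : MvPolynomial σ R) ^ a i) '' T) ↔
      ∃ i ∈ T, a i ≤ d i := by
  simp_rw [X_pow_eq_monomial]
  rw [← Set.image_image (fun g => monomial g (1 : R)) (fun i => Finsupp.single i (a i)),
    monomial_one_mem_span_monomial_image]
  simp [Finsupp.single_le_iff]

/-- `monomial (u ⊔ v) 1` is the lcm of `monomial u 1` and `monomial v 1`. -/
def IsLcmPrime (I : Ideal (MvPolynomial σ R)) : Prop :=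
  ∀ u v : σ →₀ ℕ, monomial (u ⊔ v) (1 : R) ∈ I → monomial u (1 : R) ∈ I ∨ monomial v (1 : R) ∈ I

theorem isLcmPrime_span_X_pow_image [Nontrivial R] (T : Set σ) (a : σ → ℕ) :
    IsLcmPrime (Ideal.span ((fun i => (X i : MvPolynomial σ R) ^ a i) '' T)) := by
  intro u v huv
  simp_rw [monomial_one_mem_span_X_pow_image, Finsupp.sup_apply, le_sup_iff] at huv ⊢
  obtain ⟨i, hi, hu | hv⟩ := huv
  exacts [Or.inl ⟨i, hi, hu⟩, Or.inr ⟨i, hi, hv⟩]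

theorem span_monomial_image_eq_inf [Nontrivial R] {G : Set (σ →₀ ℕ)} {u v : σ →₀ ℕ}
    (huv : monomial (u ⊔ v) (1 : R) ∈ Ideal.span ((fun g => monomial g (1 : R)) '' G)) :
    Ideal.span ((fun g => monomial g (1 : R)) '' G) =
      Ideal.span ((fun g => monomial g (1 : R)) '' insert u G) ⊓
        Ideal.span ((fun g => monomial g (1 : R)) '' insert v G) := by
  refine le_antisymm (le_inf (Ideal.span_mono (Set.image_mono (Set.subset_insert _ _)))
    (Ideal.span_mono (Set.image_mono (Set.subset_insert _ _)))) ?_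
  rintro p ⟨hpu, hpv⟩
  simp only [SetLike.mem_coe, mem_ideal_span_monomial_image, Set.mem_insert_iff,
    exists_eq_or_imp] at hpu hpv ⊢
  intro e he
  obtain hue | hG := hpu e he
  · obtain hve | hG := hpv e he
    · obtain ⟨g, hg, hguv⟩ := monomial_one_mem_span_monomial_image.1 huv
      exact ⟨g, hg, hguv.trans (sup_le hue hve)⟩
    · exact hG
  · exact hG

def purePowerSupport (I : Ideal (MvPolynomial σ R)) : Set σ :=
  {i | ∃ k, 0 < k ∧ (X i : MvPolynomial σ R) ^ k ∈ I}

noncomputable def purePowerExponent (I : Ideal (MvPolynomial σ R)) (i : σ) : ℕ :=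
  sInf {k | 0 < k ∧ (X i : MvPolynomial σ R) ^ k ∈ I}

theorem purePowerExponent_spec {I : Ideal (MvPolynomial σ R)} {i : σ}
    (hi : i ∈ purePowerSupport I) :
    0 < purePowerExponent I i ∧ (X i : MvPolynomial σ R) ^ purePowerExponent I i ∈ I :=
  Nat.sInf_mem hi

noncomputable def purePowerPart (I : Ideal (MvPolynomial σ R)) : Ideal (MvPolynomial σ R) :=
  Ideal.span ((fun i => (X i : MvPolynomial σ R) ^ purePowerExponent I i) '' purePowerSupport I)

theorem purePowerPart_le (I : Ideal (MvPolynomial σ R)) : purePowerPart I ≤ I := by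
  rw [purePowerPart, Ideal.span_le]
  rintro _ ⟨i, hi, rfl⟩
  exact (purePowerExponent_spec hi).2

theorem X_pow_mem_purePowerPart {I : Ideal (MvPolynomial σ R)} {i : σ} {k : ℕ} (hk : 0 < k)
    (h : (X i : MvPolynomial σ R) ^ k ∈ I) : (X i : MvPolynomial σ R) ^ k ∈ purePowerPart I :=
  have hi : i ∈ purePowerSupport I := ⟨k, hk, h⟩
  (purePowerPart I).pow_mem_of_pow_mem (Ideal.subset_span ⟨i, hi, rfl⟩) (Nat.sInf_le ⟨hk, h⟩)

theorem IsLcmPrime.monomial_one_mem_purePowerPart {I : Ideal (MvPolynomial σ R)}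
    (hprime : IsLcmPrime I) (hproper : I ≠ ⊤) (d : σ →₀ ℕ) (hd : monomial d (1 : R) ∈ I) :
    monomial d (1 : R) ∈ purePowerPart I := by
  induction d using Finsupp.induction with
  | zero => exact absurd ((Ideal.eq_top_iff_one I).2 hd) hproper
  | single_add i k f hi hk ih =>
    have hdisj : Disjoint (Finsupp.single i k) f := by
      rw [Finsupp.disjoint_iff, Finsupp.support_single i hk, Finset.disjoint_singleton_left]
      exact hi
    rw [Finsupp.add_eq_sup_of_disjoint hdisj] at hd ⊢
    obtain hk' | hf := hprime _ _ hd
    · rw [← X_pow_eq_monomial] at hk'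
      have hpure := X_pow_mem_purePowerPart (Nat.pos_of_ne_zero hk) hk'
      rw [X_pow_eq_monomial] at hpure
      exact monomial_one_mem_of_le hpure le_sup_left
    · exact monomial_one_mem_of_le (ih hf) le_sup_right

theorem lt_span_monomial_image_insert {I : Ideal (MvPolynomial σ R)} {G : Set (σ →₀ ℕ)}
    (hG : I = Ideal.span ((fun g => monomial g (1 : R)) '' G)) {u : σ →₀ ℕ}
    (hu : monomial u (1 : R) ∉ I) :
    I < Ideal.span ((fun g => monomial g (1 : R)) '' insert u G) :=
  SetLike.lt_iff_le_and_exists.2 ⟨hG ▸ Ideal.span_mono (Set.image_mono (Set.subset_insert _ _)),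
    _, Ideal.subset_span ⟨u, Set.mem_insert _ _, rfl⟩, hu⟩

theorem exists_monomial_one_notMem_of_not_span_le {I : Ideal (MvPolynomial σ R)}
    {G : Set (σ →₀ ℕ)} (h : ¬ Ideal.span ((fun g => monomial g (1 : R)) '' G) ≤ I) :
    ∃ g ∈ G, monomial g (1 : R) ∉ I := by
  simpa [Ideal.span_le, Set.image_subset_iff, Set.not_subset] using h

end MvPolynomial

section Monomial

variable {K : Type*} [Field K] {n : ℕ}

def IsMonomialIrreducible (I : Ideal (MvPolynomial (Fin n) K)) : Prop :=
  ¬ ∃ J₁ J₂ : Ideal (MvPolynomial (Fin n) K), IsMonomialIdeal J₁ ∧ IsMonomialIdeal J₂ ∧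
    I < J₁ ∧ I < J₂ ∧ I = J₁ ⊓ J₂

theorem IsMonomialIdeal.isLcmPrime {I : Ideal (MvPolynomial (Fin n) K)} (hI : IsMonomialIdeal I)
    (hirr : IsMonomialIrreducible I) : IsLcmPrime I := by
  obtain ⟨G, hG⟩ := hI
  intro u v huv
  by_contra! ⟨hu, hv⟩
  exact hirr ⟨_, _, ⟨_, rfl⟩, ⟨_, rfl⟩, lt_span_monomial_image_insert hG hu,
    lt_span_monomial_image_insert hG hv, hG.trans (span_monomial_image_eq_inf (hG ▸ huv))⟩

theorem MvPolynomial.IsLcmPrime.isMonomialIrreducible {I : Ideal (MvPolynomial (Fin n) K)}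
    (hI : IsLcmPrime I) : IsMonomialIrreducible I := by
  rintro ⟨_, _, ⟨G₁, rfl⟩, ⟨G₂, rfl⟩, h₁, h₂, hI₁₂⟩
  obtain ⟨u, hu, huI⟩ := exists_monomial_one_notMem_of_not_span_le h₁.not_ge
  obtain ⟨v, hv, hvI⟩ := exists_monomial_one_notMem_of_not_span_le h₂.not_ge
  have huv : monomial (u ⊔ v) (1 : K) ∈ I := hI₁₂ ▸ Ideal.mem_inf.2
    ⟨monomial_one_mem_of_le (Ideal.subset_span ⟨u, hu, rfl⟩) le_sup_left,
      monomial_one_mem_of_le (Ideal.subset_span ⟨v, hv, rfl⟩) le_sup_right⟩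
  exact (hI u v huv).elim huI hvI

theorem IsMonomialIdeal.eq_purePowerPart {I : Ideal (MvPolynomial (Fin n) K)}
    (hI : IsMonomialIdeal I) (hprime : IsLcmPrime I) (hproper : I ≠ ⊤) :
    I = purePowerPart I := by
  obtain ⟨G, hG⟩ := hI
  refine le_antisymm (hG.trans_le (Ideal.span_le.2 ?_)) (purePowerPart_le I)
  rintro _ ⟨g, hg, rfl⟩
  exact hprime.monomial_one_mem_purePowerPart hproper g (hG ▸ Ideal.subset_span ⟨g, hg, rfl⟩)

end Monomial

/-- A proper monomial ideal is irreducible (it cannot be written as the intersection of two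
strictly larger monomial ideals) if and only if it is generated by pure powers of a subset of
the variables. -/
theorem monomialIdeal_irreducible_iff_purePowers {K : Type*} [Field K] {n : ℕ}
    (I : Ideal (MvPolynomial (Fin n) K)) (hmon : IsMonomialIdeal I) (hproper : I ≠ ⊤) :
    (¬ ∃ J₁ J₂ : Ideal (MvPolynomial (Fin n) K), IsMonomialIdeal J₁ ∧ IsMonomialIdeal J₂ ∧
        I < J₁ ∧ I < J₂ ∧ I = J₁ ⊓ J₂) ↔
      ∃ (T : Finset (Fin n)) (a : Fin n → ℕ), (∀ i ∈ T, 0 < a i) ∧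
        I = Ideal.span ((fun i => (X i : MvPolynomial (Fin n) K) ^ a i) '' (T : Set (Fin n))) := by
  constructor
  · intro hirr
    have hI := hmon.eq_purePowerPart (hmon.isLcmPrime hirr) hproper
    refine ⟨(Set.toFinite (purePowerSupport I)).toFinset, purePowerExponent I,
      fun i hi => (purePowerExponent_spec ((Set.Finite.mem_toFinset _).1 hi)).1, ?_⟩
    rwa [Set.Finite.coe_toFinset]
  · rintro ⟨T, a, -, rfl⟩
    exact (isLcmPrime_span_X_pow_image (T : Set (Fin n)) a).isMonomialIrreducible
end

section
/- Let I = Q_1 ∩ ... ∩ Q_s be an irredundant intersection of irreducible monomial ideals in S = K[x_1,...,x_n]. If for every index i and every nonempty proper subset τ ⊂ {1,...,s} the inclusion √Q_i ⊆ Σ_{j∈τ} √Q_j implies Q_i ⊆ Σ_{j∈τ} Q_j, then I has no embedded associated primes; that is, √Q_i ⊆ √Q_j implies i = j. -/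
open MvPolynomial

/-- A monomial ideal is *irreducible* if it is generated by pure powers `x_i ^ a_i` of some
of the variables, with `a_i ≥ 1`. -/
def IsPurePowerIdeal {K : Type*} [Field K] {n : ℕ}
    (Q : Ideal (MvPolynomial (Fin n) K)) : Prop :=
  ∃ (T : Finset (Fin n)) (a : Fin n → ℕ), (∀ i ∈ T, 0 < a i) ∧
    Q = Ideal.span ((fun i => (X i : MvPolynomial (Fin n) K) ^ a i) '' (T : Set (Fin n)))

/-- If `I = Q 0 ⊓ ... ⊓ Q (s-1)` is an irredundant intersection of irreducible monomial
ideals such that for every `i` and every nonempty proper `τ ⊆ [s]` the inclusion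
`√(Q i) ⊆ Σ_{j ∈ τ} √(Q j)` implies `Q i ⊆ Σ_{j ∈ τ} Q j`, then there are no embedded
primes: `√(Q i) ⊆ √(Q j)` implies `i = j`. -/
theorem no_embedded_primes {K : Type*} [Field K] {n s : ℕ}
    (Q : Fin s → Ideal (MvPolynomial (Fin n) K))
    (hirr : ∀ j, IsPurePowerIdeal (Q j))
    (hirred : ∀ i : Fin s, (⨅ j ∈ Finset.univ.erase i, Q j) ≠ ⨅ j, Q j)
    (hyp : ∀ i : Fin s, ∀ τ : Finset (Fin s), τ.Nonempty → τ ≠ Finset.univ →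
      (Q i).radical ≤ ∑ j ∈ τ, (Q j).radical → Q i ≤ ∑ j ∈ τ, Q j)
    (i j : Fin s) (hij : (Q i).radical ≤ (Q j).radical) : i = j := by
  by_contra hne
  have hτne : ({j} : Finset (Fin s)).Nonempty := Finset.singleton_nonempty j
  have hτuniv : ({j} : Finset (Fin s)) ≠ Finset.univ := by
    intro h
    exact hne (Finset.mem_singleton.mp (h ▸ Finset.mem_univ i))
  have hsum : (Q i).radical ≤ ∑ k ∈ ({j} : Finset (Fin s)), (Q k).radical := by
    simpa using hij
  have hQ : Q i ≤ Q j := by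
    simpa using hyp i {j} hτne hτuniv hsum
  apply hirred j
  apply le_antisymm
  · refine le_iInf fun k => ?_
    by_cases hk : k = j
    · subst hk
      exact le_trans (biInf_le Q (Finset.mem_erase.mpr ⟨hne, Finset.mem_univ i⟩)) hQ
    · exact biInf_le Q (Finset.mem_erase.mpr ⟨hk, Finset.mem_univ k⟩)
  · exact le_iInf₂ fun k _ => iInf_le Q k
end

section
/- Let τ be a proper subset of {1,...,s} and let w_1 ≠ w_2 be two distinct monomials in M_τ. Then the K-vector spaces ((∩_{j∈[s]∖τ}Q_j ∩ w_1·S_τ)·S_τ[x_{r+1},...,x_n]) and ((∩_{j∈[s]∖τ}Q_j ∩ w_2·S_τ)·S_τ[x_{r+1},...,x_n]) intersect trivially. -/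
open MvPolynomial

/-- The `K`-span of the monomials with exponent vectors in `E`. -/
noncomputable def monSpan (K : Type*) [Field K] {n : ℕ} (E : Set (Fin n →₀ ℕ)) :
    Submodule K (MvPolynomial (Fin n) K) :=
  Submodule.span K ((fun d => monomial d (1 : K)) '' E)

/-- The set of variables of `S_τ`: those `x_i` with `i ≤ r` and `x_i ∉ Σ_{j ∈ τ} √(Q j)`. -/
def Zvars {K : Type*} [Field K] {n s : ℕ} (r : ℕ)
    (Q : Fin s → Ideal (MvPolynomial (Fin n) K)) (τ : Finset (Fin s)) : Set (Fin n) :=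
  {i | (i : ℕ) < r ∧ (X i : MvPolynomial (Fin n) K) ∉ ∑ j ∈ τ, (Q j).radical}

/-- The exponent vectors of the monomials of
`M_τ = {u ∈ Mon(S') | u ∉ Σ_{j ∈ τ} Q j} ∩ K[x_i : x_i ∈ Σ_{j ∈ τ} √(Q j)]`,
where `S' = K[x_1, ..., x_r]`. -/
def Mexp {K : Type*} [Field K] {n s : ℕ} (r : ℕ)
    (Q : Fin s → Ideal (MvPolynomial (Fin n) K)) (τ : Finset (Fin s)) :
    Set (Fin n →₀ ℕ) :=
  {u | (u.support : Set (Fin n)) ⊆ {i | (i : ℕ) < r} ∧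
    monomial u (1 : K) ∉ ∑ j ∈ τ, Q j ∧
    (u.support : Set (Fin n)) ⊆
      {i | (X i : MvPolynomial (Fin n) K) ∈ ∑ j ∈ τ, (Q j).radical}}

/-- The summand `u·S''` of the decomposition, for a monomial `u` of `S' \ Q`:
the `K`-span of the monomials `u·v` with `v` a monomial of `S'' = K[x_{r+1}, ..., x_n]`. -/
noncomputable def uSummand {K : Type*} [Field K] {n : ℕ} (r : ℕ) (u : Fin n →₀ ℕ) :
    Submodule K (MvPolynomial (Fin n) K) :=
  monSpan K {d | ∃ e : Fin n →₀ ℕ, (e.support : Set (Fin n)) ⊆ {i | r ≤ (i : ℕ)} ∧ d = u + e}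

/-- The summand `(⋂_{j ∈ [s] \ τ} Q j ∩ w·S_τ)·S_τ[x_{r+1}, ..., x_n]` of the
decomposition: the `K`-span of the monomials `m·v` where `m ∈ ⋂_{j ∉ τ} Q j`,
`m ∈ w·S_τ` and `v` is a monomial of `S_τ[x_{r+1}, ..., x_n]`. -/
noncomputable def tauSummand {K : Type*} [Field K] {n s : ℕ} (r : ℕ)
    (Q : Fin s → Ideal (MvPolynomial (Fin n) K)) (τ : Finset (Fin s)) (w : Fin n →₀ ℕ) :
    Submodule K (MvPolynomial (Fin n) K) :=
  monSpan K {d | ∃ m v : Fin n →₀ ℕ, d = m + v ∧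
    monomial m (1 : K) ∈ (⨅ j ∈ τᶜ, Q j) ∧
    (∃ e : Fin n →₀ ℕ, (e.support : Set (Fin n)) ⊆ Zvars r Q τ ∧ m = w + e) ∧
    (v.support : Set (Fin n)) ⊆ Zvars r Q τ ∪ {i | r ≤ (i : ℕ)}}

/-- Two summands of the decomposition of `S` corresponding to the same proper subset `τ`
but distinct monomials `w₁ ≠ w₂` in `M_τ` intersect trivially. -/
theorem summands_disjoint_same_tau {K : Type*} [Field K] {n s : ℕ} (r : ℕ)
    (hr : r ≤ n) (Q : Fin s → Ideal (MvPolynomial (Fin n) K))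
    (hirr : ∀ j, IsPurePowerIdeal (Q j))
    (hirred : ∀ i : Fin s, (⨅ j ∈ Finset.univ.erase i, Q j) ≠ ⨅ j, Q j)
    (τ : Finset (Fin s)) (hτ : τ ≠ Finset.univ)
    (w₁ w₂ : Fin n →₀ ℕ) (hw₁ : w₁ ∈ Mexp r Q τ) (hw₂ : w₂ ∈ Mexp r Q τ)
    (hne : w₁ ≠ w₂) :
    tauSummand r Q τ w₁ ⊓ tauSummand r Q τ w₂ = ⊥ := by
  rw [← disjoint_iff]
  unfold tauSummand monSpan
  rw [← MvPolynomial.coe_basisMonomials]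
  apply (MvPolynomial.basisMonomials (Fin n) K).linearIndependent.disjoint_span_image
  rw [Set.disjoint_left]
  rintro d ⟨m₁, v₁, hd₁, hm₁Q, ⟨e₁, he₁, hm₁⟩, hv₁⟩ ⟨m₂, v₂, hd₂, hm₂Q, ⟨e₂, he₂, hm₂⟩, hv₂⟩
  apply hne
  ext i
  by_cases hA : (i : ℕ) < r ∧ (X i : MvPolynomial (Fin n) K) ∈ ∑ j ∈ τ, (Q j).radical
  · have hz : i ∉ Zvars r Q τ := fun h => h.2 hA.2
    have hge : i ∉ {i : Fin n | r ≤ (i : ℕ)} := not_le.2 hA.1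
    have he₁i : e₁ i = 0 :=
      Finsupp.notMem_support_iff.1 (fun h => hz (he₁ h))
    have he₂i : e₂ i = 0 :=
      Finsupp.notMem_support_iff.1 (fun h => hz (he₂ h))
    have hv₁i : v₁ i = 0 :=
      Finsupp.notMem_support_iff.1 (fun h => (hv₁ h).elim hz hge)
    have hv₂i : v₂ i = 0 :=
      Finsupp.notMem_support_iff.1 (fun h => (hv₂ h).elim hz hge)
    have h1 : d i = w₁ i := by
      rw [hd₁, hm₁]; simp [Finsupp.add_apply, he₁i, hv₁i]
    have h2 : d i = w₂ i := by
      rw [hd₂, hm₂]; simp [Finsupp.add_apply, he₂i, hv₂i]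
    rw [← h1, ← h2]
  · have h1 : w₁ i = 0 := by
      by_contra h
      have hi : i ∈ w₁.support := Finsupp.mem_support_iff.2 h
      exact hA ⟨hw₁.1 hi, hw₁.2.2 hi⟩
    have h2 : w₂ i = 0 := by
      by_contra h
      have hi : i ∈ w₂.support := Finsupp.mem_support_iff.2 h
      exact hA ⟨hw₂.1 hi, hw₂.2.2 hi⟩
    rw [h1, h2]
end

section
/- Let τ_1 ≠ τ_2 be proper subsets of {1,...,s}, w_1 ∈ M_{τ_1}, w_2 ∈ M_{τ_2}. Then ((∩_{j∈[s]∖τ_1}Q_j ∩ w_1·S_{τ_1})·S_{τ_1}[x_{r+1},...,x_n]) ∩ ((∩_{j∈[s]∖τ_2}Q_j ∩ w_2·S_{τ_2})·S_{τ_2}[x_{r+1},...,x_n]) = 0 as K-vector spaces. -/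
open MvPolynomial

/-!
Both summands are spanned by monomials, so it suffices that they share none. Take `j ∈ τ₂ \ τ₁`.
A monomial of the `τ₁`-summand is `m·v` with `m ∈ Q j ∩ w₁·S_{τ₁}`, so `m` is divisible by a
generator `x_i^a` of `Q j`, with `i ≤ r` as `m ∈ S'`. Since `x_i ∈ √(Q j) ⊆ Σ_{k ∈ τ₂} √(Q k)`,
the variable `x_i` does not occur in `S_{τ₂}[x_{r+1}, ..., x_n]`, so in a monomial of the
`τ₂`-summand its exponent is that of `w₂`. A common monomial would give `x_i^a ∣ w₂`, i.e.
`w₂ ∈ Q j ⊆ Σ_{k ∈ τ₂} Q k`, contradicting `w₂ ∈ M_{τ₂}`.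
-/

lemma monSpan_eq_restrictSupport (K : Type*) [Field K] {n : ℕ} (E : Set (Fin n →₀ ℕ)) :
    monSpan K E = restrictSupport K E :=
  (restrictSupport_eq_span (R := K) E).symm

lemma monSpan_inf_eq_bot {K : Type*} [Field K] {n : ℕ} {E₁ E₂ : Set (Fin n →₀ ℕ)}
    (h : Disjoint E₁ E₂) : monSpan K E₁ ⊓ monSpan K E₂ = ⊥ := by
  simp only [monSpan_eq_restrictSupport, Submodule.eq_bot_iff, Submodule.mem_inf,
    mem_restrictSupport_iff]
  rintro p ⟨h₁, h₂⟩
  exact support_eq_empty.1 (Finset.coe_eq_empty.1 (le_bot_iff.1 (h h₁ h₂)))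

namespace MvPolynomial

variable {σ R : Type*} [CommSemiring R]

lemma monomial_one_mem_span_X_pow_iff [Nontrivial R] (T : Set σ) (a : σ → ℕ) (u : σ →₀ ℕ) :
    monomial u (1 : R) ∈ Ideal.span ((fun i => (X i : MvPolynomial σ R) ^ a i) '' T) ↔
      ∃ i ∈ T, a i ≤ u i := by
  classical
  have hgen : (fun i => (X i : MvPolynomial σ R) ^ a i) '' T =
      (fun d => monomial d (1 : R)) '' ((fun i => Finsupp.single i (a i)) '' T) := by
    rw [Set.image_image]
    exact Set.image_congr fun i _ => X_pow_eq_monomial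
  rw [hgen, mem_ideal_span_monomial_image, support_monomial, if_neg one_ne_zero]
  simp [Finsupp.single_le_iff]

lemma X_mem_radical_span_X_pow {T : Set σ} {i : σ} (hi : i ∈ T) (a : σ → ℕ) :
    (X i : MvPolynomial σ R) ∈
      (Ideal.span ((fun i => (X i : MvPolynomial σ R) ^ a i) '' T)).radical :=
  ⟨a i, Ideal.subset_span ⟨i, hi, rfl⟩⟩

end MvPolynomial

def tauExp (K : Type*) [Field K] {n s : ℕ} (r : ℕ)
    (Q : Fin s → Ideal (MvPolynomial (Fin n) K)) (τ : Finset (Fin s)) (w : Fin n →₀ ℕ) :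
    Set (Fin n →₀ ℕ) :=
  {d | ∃ m v : Fin n →₀ ℕ, d = m + v ∧
    monomial m (1 : K) ∈ (⨅ j ∈ τᶜ, Q j) ∧
    (∃ e : Fin n →₀ ℕ, (e.support : Set (Fin n)) ⊆ Zvars r Q τ ∧ m = w + e) ∧
    (v.support : Set (Fin n)) ⊆ Zvars r Q τ ∪ {i | r ≤ (i : ℕ)}}

section Exponents

variable {K : Type*} [Field K] {n s r : ℕ} {Q : Fin s → Ideal (MvPolynomial (Fin n) K)}
  {τ : Finset (Fin s)} {w e v : Fin n →₀ ℕ} {i : Fin n}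

lemma tauSummand_eq_monSpan (w : Fin n →₀ ℕ) :
    tauSummand r Q τ w = monSpan K (tauExp K r Q τ w) :=
  rfl

lemma lt_of_add_apply_ne_zero (hw : w ∈ Mexp r Q τ)
    (he : (e.support : Set (Fin n)) ⊆ Zvars r Q τ) (hi : (w + e) i ≠ 0) : (i : ℕ) < r := by
  rw [Finsupp.add_apply] at hi
  by_cases hwi : w i = 0
  · exact (he (Finsupp.mem_support_iff.2 (by omega))).1
  · exact hw.1 (Finsupp.mem_support_iff.2 hwi)

lemma add_add_apply_eq_of_X_mem (he : (e.support : Set (Fin n)) ⊆ Zvars r Q τ)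
    (hv : (v.support : Set (Fin n)) ⊆ Zvars r Q τ ∪ {i | r ≤ (i : ℕ)}) (hir : (i : ℕ) < r)
    (hX : (X i : MvPolynomial (Fin n) K) ∈ ∑ j ∈ τ, (Q j).radical) :
    (w + e + v) i = w i := by
  have hiZ : i ∉ Zvars r Q τ := fun h => h.2 hX
  have hei : e i = 0 := Finsupp.notMem_support_iff.1 fun h => hiZ (he h)
  have hvi : v i = 0 := Finsupp.notMem_support_iff.1 fun h =>
    (hv h).elim hiZ fun hri => absurd hir (not_lt.2 hri)
  simp [hei, hvi]

lemma notMem_tauExp_of_mem_tauExp {τ₁ τ₂ : Finset (Fin s)} {j : Fin s}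
    (hirr : IsPurePowerIdeal (Q j)) (hj₁ : j ∉ τ₁) (hj₂ : j ∈ τ₂) {w₁ w₂ d : Fin n →₀ ℕ}
    (hw₁ : w₁ ∈ Mexp r Q τ₁) (hw₂ : w₂ ∈ Mexp r Q τ₂) (hd : d ∈ tauExp K r Q τ₁ w₁) :
    d ∉ tauExp K r Q τ₂ w₂ := by
  rintro ⟨m₂, v₂, rfl, -, ⟨e₂, he₂, rfl⟩, hv₂⟩
  obtain ⟨m₁, v₁, hd, hm₁, ⟨e₁, he₁, rfl⟩, -⟩ := hd
  obtain ⟨T, a, ha, hQ⟩ := hirr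
  have hm₁j : monomial (w₁ + e₁) (1 : K) ∈ Q j :=
    (Submodule.mem_iInf _).1 ((Submodule.mem_iInf _).1 hm₁ j) (Finset.mem_compl.2 hj₁)
  rw [hQ, monomial_one_mem_span_X_pow_iff] at hm₁j
  obtain ⟨i, hiT, hai⟩ := hm₁j
  have hir : (i : ℕ) < r := lt_of_add_apply_ne_zero hw₁ he₁ (by have := ha i hiT; omega)
  have hX : (X i : MvPolynomial (Fin n) K) ∈ ∑ j ∈ τ₂, (Q j).radical :=
    Finset.single_le_sum (f := fun j => (Q j).radical) (fun _ _ => zero_le) hj₂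
      (hQ ▸ X_mem_radical_span_X_pow hiT a)
  have hw₂i : a i ≤ w₂ i := calc
    a i ≤ (w₁ + e₁ + v₁) i := hai.trans (by simp)
    _ = (w₂ + e₂ + v₂) i := by rw [← hd]
    _ = w₂ i := add_add_apply_eq_of_X_mem he₂ hv₂ hir hX
  have hw₂j : monomial w₂ (1 : K) ∈ Q j := by
    rw [hQ, monomial_one_mem_span_X_pow_iff]
    exact ⟨i, hiT, hw₂i⟩
  exact hw₂.2.1 (Finset.single_le_sum (f := Q) (fun _ _ => zero_le) hj₂ hw₂j)

lemma disjoint_tauExp (hirr : ∀ j, IsPurePowerIdeal (Q j)) {τ₁ τ₂ : Finset (Fin s)}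
    (hne : τ₁ ≠ τ₂) {w₁ w₂ : Fin n →₀ ℕ} (hw₁ : w₁ ∈ Mexp r Q τ₁) (hw₂ : w₂ ∈ Mexp r Q τ₂) :
    Disjoint (tauExp K r Q τ₁ w₁) (tauExp K r Q τ₂ w₂) := by
  obtain ⟨j, hj⟩ : ∃ j, ¬(j ∈ τ₁ ↔ j ∈ τ₂) := by
    by_contra! h
    exact hne (Finset.ext h)
  by_cases hj₁ : j ∈ τ₁
  · exact Set.disjoint_right.2 fun d hd =>
      notMem_tauExp_of_mem_tauExp (hirr j) (by tauto) hj₁ hw₂ hw₁ hd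
  · exact Set.disjoint_left.2 fun d hd =>
      notMem_tauExp_of_mem_tauExp (hirr j) hj₁ (by tauto) hw₁ hw₂ hd

end Exponents

theorem summands_disjoint_distinct_tau_general {K : Type*} [Field K] {n s : ℕ} (r : ℕ)
    (Q : Fin s → Ideal (MvPolynomial (Fin n) K))
    (hirr : ∀ j, IsPurePowerIdeal (Q j))
    (τ₁ τ₂ : Finset (Fin s))
    (hne : τ₁ ≠ τ₂)
    (w₁ w₂ : Fin n →₀ ℕ) (hw₁ : w₁ ∈ Mexp r Q τ₁) (hw₂ : w₂ ∈ Mexp r Q τ₂) :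
    tauSummand r Q τ₁ w₁ ⊓ tauSummand r Q τ₂ w₂ = ⊥ := by
  rw [tauSummand_eq_monSpan, tauSummand_eq_monSpan]
  exact monSpan_inf_eq_bot (disjoint_tauExp hirr hne hw₁ hw₂)

/-- Two summands of the decomposition of `S` corresponding to distinct proper subsets
`τ₁ ≠ τ₂` (with `w₁ ∈ M_{τ₁}`, `w₂ ∈ M_{τ₂}`) intersect trivially. -/
theorem summands_disjoint_distinct_tau {K : Type*} [Field K] {n s : ℕ} (r : ℕ)
    (hr : r ≤ n) (Q : Fin s → Ideal (MvPolynomial (Fin n) K))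
    (hirr : ∀ j, IsPurePowerIdeal (Q j))
    (hirred : ∀ i : Fin s, (⨅ j ∈ Finset.univ.erase i, Q j) ≠ ⨅ j, Q j)
    (τ₁ τ₂ : Finset (Fin s)) (hτ₁ : τ₁ ≠ Finset.univ) (hτ₂ : τ₂ ≠ Finset.univ)
    (hne : τ₁ ≠ τ₂)
    (w₁ w₂ : Fin n →₀ ℕ) (hw₁ : w₁ ∈ Mexp r Q τ₁) (hw₂ : w₂ ∈ Mexp r Q τ₂) :
    tauSummand r Q τ₁ w₁ ⊓ tauSummand r Q τ₂ w₂ = ⊥ :=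
  summands_disjoint_distinct_tau_general r Q hirr τ₁ τ₂ hne w₁ w₂ hw₁ hw₂
end

section
/- For an irreducible monomial ideal I = (x_1^{a_1},...,x_r^{a_r}) in S = K[x_1,...,x_n] (a_i ≥ 1), the Stanley depth of S/I equals n - r. -/
open MvPolynomial

/-- The set of exponent vectors of the monomials in the Stanley space `u·K[Z]`, where `u`
is the monomial with exponent vector `d`: all `d + e` with `e` supported in `Z`. -/
def stanleySet {V : Type*} (d : V →₀ ℕ) (Z : Finset V) : Set (V →₀ ℕ) :=
  {m | ∃ e : V →₀ ℕ, (e.support : Set V) ⊆ (Z : Set V) ∧ m = d + e}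

/-- `D` is a Stanley decomposition of the monomial set `M` over the set of variables `A`:
the Stanley sets of the (finitely many) pairs `(d, Z) ∈ D`, with `Z ⊆ A`, are pairwise
disjoint and their union is `M`. -/
def IsStanleyDecomp {V : Type*} (A : Set V) (M : Set (V →₀ ℕ))
    (D : Finset ((V →₀ ℕ) × Finset V)) : Prop :=
  (∀ p ∈ D, (p.2 : Set V) ⊆ A) ∧
    (⋃ p ∈ D, stanleySet p.1 p.2) = M ∧
    (D : Set ((V →₀ ℕ) × Finset V)).Pairwise
      (fun p q => Disjoint (stanleySet p.1 p.2) (stanleySet q.1 q.2))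

/-- The Stanley depth of a monomial set `M` (encoding a monomial-spanned module over the
polynomial ring on the variables `A`): the supremum over Stanley decompositions `D` of `M`
of the minimal size of a `Z` occurring in `D`. -/
noncomputable def sdepthSet {V : Type*} (A : Set V) (M : Set (V →₀ ℕ)) : ℕ :=
  sSup {k : ℕ | ∃ D, IsStanleyDecomp A M D ∧ ∀ p ∈ D, k ≤ p.2.card}

/-- [Rauf, Theorem 1.1] For an irreducible monomial ideal
`I = (x_{i₁}^{a₁}, ..., x_{i_r}^{a_r})` in `S = K[x_1, ..., x_n]`, the Stanley depth of
`S/I` (encoded by the set of monomials not in `I`) equals `n - r`. -/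
theorem sdepth_quotient_purePower {K : Type*} [Field K] {n r : ℕ}
    (T : Finset (Fin n)) (hT : T.card = r) (a : Fin n → ℕ) (ha : ∀ i ∈ T, 0 < a i)
    (I : Ideal (MvPolynomial (Fin n) K))
    (hI : I = Ideal.span
      ((fun i => (X i : MvPolynomial (Fin n) K) ^ a i) '' (T : Set (Fin n)))) :
    sdepthSet (Set.univ : Set (Fin n))
      {d : Fin n →₀ ℕ | monomial d (1 : K) ∉ I} = n - r := by
  classical
  -- membership characterization
  have hmem : ∀ d : Fin n →₀ ℕ, (monomial d (1 : K) ∉ I) ↔ ∀ i ∈ T, d i < a i := by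
    intro d
    rw [hI]
    have himg : ((fun i => (X i : MvPolynomial (Fin n) K) ^ a i) '' (T : Set (Fin n)))
        = ((fun s => monomial s (1:K)) '' ((fun i => Finsupp.single i (a i)) '' (T : Set (Fin n)))) := by
      rw [Set.image_image]
      exact Set.image_congr fun i _ => X_pow_eq_monomial
    rw [himg, mem_ideal_span_monomial_image]
    rw [show (monomial d (1:K)).support = {d} from by
      rw [support_monomial, if_neg (one_ne_zero' K)]]
    push_neg
    simp [Finsupp.single_le_iff]
  set M : Set (Fin n →₀ ℕ) := {d : Fin n →₀ ℕ | monomial d (1 : K) ∉ I} with hM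
  have hMiff : ∀ d : Fin n →₀ ℕ, d ∈ M ↔ ∀ i ∈ T, d i < a i := fun d => hmem d
  -- the corner exponent vector
  set dstar : Fin n →₀ ℕ := Finsupp.indicator T (fun i _ => a i - 1) with hdstar
  have hds_mem : ∀ i ∈ T, dstar i = a i - 1 := fun i hi => Finsupp.indicator_of_mem hi _
  have hds_not : ∀ i ∉ T, dstar i = 0 := fun i hi => Finsupp.indicator_of_notMem hi _
  have hrn : r ≤ n := by rw [← hT]; simpa using T.card_le_univ
  have hcompl : (Tᶜ : Finset (Fin n)).card = n - r := by
    rw [Finset.card_compl, hT, Fintype.card_fin]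
  -- characterize stanleySet d Tᶜ for d ≤ dstar
  have hstan : ∀ d : Fin n →₀ ℕ, d ≤ dstar → ∀ m : Fin n →₀ ℕ,
      (m ∈ stanleySet d Tᶜ ↔ ∀ i ∈ T, m i = d i) := by
    intro d hd m
    constructor
    · rintro ⟨e, he, rfl⟩ i hi
      have : e i = 0 := by
        by_contra h
        have := he (Finsupp.mem_support_iff.2 h)
        simp at this
        exact this hi
      simp [this]
    · intro h
      have hdm : d ≤ m := by
        intro i
        by_cases hi : i ∈ T
        · rw [h i hi]
        · have : d i ≤ dstar i := hd i
          rw [hds_not i hi] at this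
          simp [Nat.le_zero.1 this]
      refine ⟨m - d, ?_, ?_⟩
      · intro i hi
        simp only [Finset.coe_compl, Set.mem_compl_iff, Finset.mem_coe]
        intro hiT
        rw [Finset.mem_coe, Finsupp.mem_support_iff, Finsupp.tsub_apply, h i hiT] at hi
        simp at hi
      · rw [add_tsub_cancel_of_le hdm]
  -- the explicit decomposition
  set S : Finset (Fin n →₀ ℕ) := Finset.Iic dstar with hS
  set D : Finset ((Fin n →₀ ℕ) × Finset (Fin n)) := S.image (fun d => (d, Tᶜ)) with hD
  have hDstan : IsStanleyDecomp (Set.univ : Set (Fin n)) M D := by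
    refine ⟨fun p _ => Set.subset_univ _, ?_, ?_⟩
    · ext m
      simp only [Set.mem_iUnion, exists_prop]
      constructor
      · rintro ⟨p, hp, hm⟩
        simp only [hD, Finset.mem_image, hS, Finset.mem_Iic] at hp
        obtain ⟨d, hd, rfl⟩ := hp
        rw [hstan d hd m] at hm
        rw [hMiff]
        intro i hi
        rw [hm i hi]
        calc d i ≤ dstar i := hd i
          _ = a i - 1 := hds_mem i hi
          _ < a i := Nat.sub_lt (ha i hi) one_pos
      · intro hm
        rw [hMiff] at hm
        refine ⟨(Finsupp.indicator T (fun i _ => m i), Tᶜ), ?_, ?_⟩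
        · simp only [hD, Finset.mem_image, hS, Finset.mem_Iic]
          refine ⟨_, ?_, rfl⟩
          intro i
          by_cases hi : i ∈ T
          · rw [Finsupp.indicator_of_mem hi, hds_mem i hi]
            exact Nat.le_sub_one_of_lt (hm i hi)
          · rw [Finsupp.indicator_of_notMem hi]
            exact Nat.zero_le _
        · rw [hstan _ (by
            intro i
            by_cases hi : i ∈ T
            · rw [Finsupp.indicator_of_mem hi, hds_mem i hi]
              exact Nat.le_sub_one_of_lt (hm i hi)
            · rw [Finsupp.indicator_of_notMem hi]
              exact Nat.zero_le _) m]
          intro i hi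
          rw [Finsupp.indicator_of_mem hi]
    · intro p hp q hq hpq
      simp only [Finset.coe_image, Set.mem_image, Finset.mem_coe, hD, hS] at hp hq
      obtain ⟨d, hd, rfl⟩ := hp
      obtain ⟨d', hd', rfl⟩ := hq
      rw [Finset.mem_Iic] at hd hd'
      rw [Set.disjoint_left]
      rintro m hm hm'
      rw [hstan d hd m] at hm
      rw [hstan d' hd' m] at hm'
      apply hpq
      simp only [Prod.mk.injEq, and_true]
      ext i
      by_cases hi : i ∈ T
      · rw [← hm i hi, ← hm' i hi]
      · have h1 : d i ≤ dstar i := hd i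
        have h2 : d' i ≤ dstar i := hd' i
        rw [hds_not i hi] at h1 h2
        rw [Nat.le_zero.1 h1, Nat.le_zero.1 h2]
  -- lower bound membership
  have h1 : (n - r) ∈ {k : ℕ | ∃ D, IsStanleyDecomp (Set.univ : Set (Fin n)) M D ∧
      ∀ p ∈ D, k ≤ p.2.card} := by
    refine ⟨D, hDstan, ?_⟩
    intro p hp
    simp only [hD, Finset.mem_image] at hp
    obtain ⟨d, _, rfl⟩ := hp
    rw [hcompl]
  -- upper bound
  have h2 : ∀ k ∈ {k : ℕ | ∃ D, IsStanleyDecomp (Set.univ : Set (Fin n)) M D ∧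
      ∀ p ∈ D, k ≤ p.2.card}, k ≤ n - r := by
    rintro k ⟨D', ⟨_, hunion, _⟩, hcard⟩
    have hds : dstar ∈ M := by
      rw [hMiff]
      intro i hi
      rw [hds_mem i hi]
      exact Nat.sub_lt (ha i hi) one_pos
    rw [← hunion] at hds
    simp only [Set.mem_iUnion, exists_prop] at hds
    obtain ⟨p, hpD, e, he, hde⟩ := hds
    have hZ : p.2 ⊆ Tᶜ := by
      intro i hiZ
      rw [Finset.mem_compl]
      intro hiT
      -- build a monomial in the stanley set violating M
      have hm : dstar + Finsupp.single i (a i) ∈ stanleySet p.1 p.2 := by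
        refine ⟨e + Finsupp.single i (a i), ?_, ?_⟩
        · refine Set.Subset.trans (Finset.coe_subset.2 Finsupp.support_add) ?_
          rw [Finset.coe_union]
          apply Set.union_subset he
          intro j hj
          rw [Finset.mem_coe, Finsupp.support_single_ne_zero i (ha i hiT).ne',
            Finset.mem_singleton] at hj
          subst hj
          exact hiZ
        · rw [hde, add_assoc]
      have hmM : dstar + Finsupp.single i (a i) ∈ M := by
        rw [← hunion]
        exact Set.mem_biUnion hpD hm
      rw [hMiff] at hmM
      have := hmM i hiT
      simp only [Finsupp.add_apply, Finsupp.single_eq_same, hds_mem i hiT] at this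
      omega
    calc k ≤ p.2.card := hcard p hpD
      _ ≤ (Tᶜ : Finset (Fin n)).card := Finset.card_le_card hZ
      _ = n - r := hcompl
  rw [sdepthSet]
  exact le_antisymm (csSup_le ⟨_, h1⟩ h2) (le_csSup ⟨n - r, h2⟩ h1)
end
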